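/- If a set of adjacent vertices (u,v) satisfies the peaking criterion (f(V_{−v}(u), u) ≤ 𝒯, f(V_{−v}(u)∪{v}, v) > 𝒯) then in any feasible sink placement S with threshold 𝒯 we have S ∩ V_{−v}(u) ≠ ∅; i.e., every feasible placement must contain at least one sink inside V_{−v}(u). -/

import Mathlib

open scoped ENNReal Classical

variable {V : Type*}

/-- Vertices reachable from `u` by a walk avoiding `v` and staying inside `U`. -/
def branchIn (G : SimpleGraph V) (U : Set V) (v u : V) : Set V :=
  {x | ∃ p : G.Walk u x, v ∉ p.support ∧ ∀ y ∈ p.support, y ∈ U}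

/-- The component `V_{-v}(u)` of `T - v` containing `u`. -/
def branch (G : SimpleGraph V) (v u : V) : Set V := branchIn G Set.univ v u

/-- Atomic cost function axioms (monotone min-max). -/
structure AtomicCost (G : SimpleGraph V) (f : Set V → V → ℝ≥0∞) : Prop where
  not_mem : ∀ U v, v ∉ U → f U v = ⊤
  disconn : ∀ U v, ¬ (G.induce U).Connected → f U v = ⊤
  single : ∀ v, f {v} v = 0
  setMono : ∀ U₁ U₂ v, v ∈ U₁ → U₁ ⊆ U₂ → (G.induce U₁).Connected →
    (G.induce U₂).Connected → f U₁ v ≤ f U₂ v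
  pathMono : ∀ U x y, x ∈ U → y ∉ U → (G.induce U).Connected → G.Adj x y →
    f U x ≤ f (U ∪ {y}) y
  maxComp : ∀ U v, v ∈ U → (G.induce U).Connected →
    f U v = ⨆ u ∈ {u | G.Adj v u ∧ u ∈ U}, f (branchIn G U v u ∪ {v}) v

/-- `S` serves the ground set `A` with cost at most `T`:
there is a partition of `A` into connected blocks, each containing
exactly one sink of `S`, each block served within cost `T`. -/
def FeasibleOn (G : SimpleGraph V) (f : Set V → V → ℝ≥0∞) (T : ℝ≥0∞)
    (A S : Set V) : Prop :=
  ∃ PP : Set (Set V), (⋃₀ PP = A) ∧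
    (∀ P ∈ PP, ∀ Q ∈ PP, P ≠ Q → Disjoint P Q) ∧
    (∀ P ∈ PP, (G.induce P).Connected) ∧
    (∀ P ∈ PP, ∃! s, s ∈ S ∩ P) ∧
    (∀ P ∈ PP, ∀ s ∈ S ∩ P, f P s ≤ T)

/-- Vertices on some (the unique, in a tree) path from `u` to `v`. -/
def pathSet (G : SimpleGraph V) (u v : V) : Set V :=
  {x | ∃ p : G.Path u v, x ∈ p.1.support}

/-- Hub tree vertex set: union of paths between pairs of sinks. -/
def hubSet (G : SimpleGraph V) (S : Set V) : Set V :=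
  ⋃ s₁ ∈ S, ⋃ s₂ ∈ S, pathSet G s₁ s₂

/-- `BP(v,s)`: the path from `v` to `s` together with all outstanding
branches attached to its vertices. -/
def BP (G : SimpleGraph V) (S : Set V) (v s : V) : Set V :=
  pathSet G v s ∪
    ⋃ w ∈ pathSet G v s, ⋃ η ∈ {η | G.Adj w η ∧ η ∉ hubSet G S}, branch G w η

/-- RC-viability: every outstanding branch attached at a hub-tree node `w`
can be served by `w` within cost `T`. -/
def RCviable (G : SimpleGraph V) (f : Set V → V → ℝ≥0∞) (T : ℝ≥0∞)
    (S : Set V) : Prop :=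
  ∀ w ∈ hubSet G S, ∀ η, G.Adj w η → η ∉ hubSet G S →
    f (branch G w η ∪ {w}) w ≤ T

/-- Descendants of `x` in the tree rooted at `r`. -/
def descend (G : SimpleGraph V) (r x : V) : Set V := {y | x ∈ pathSet G r y}

/-- A vertex set is self-sufficient if it can be served by its own sinks. -/
def SelfSuff (G : SimpleGraph V) (f : Set V → V → ℝ≥0∞) (T : ℝ≥0∞)
    (S : Set V) (V' : Set V) : Prop :=
  FeasibleOn G f T V' (S ∩ V')

/-- Recursive self-sufficiency of the subtree rooted at `x` (root `r`). -/
def RecSS (G : SimpleGraph V) (f : Set V → V → ℝ≥0∞) (T : ℝ≥0∞)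
    (S : Set V) (r x : V) : Prop :=
  ∀ u ∈ hubSet G S, u ∈ descend G r x → SelfSuff G f T S (descend G r u)

/-- Boundary of a vertex set: its vertices adjacent to the outside. -/
def boundary (G : SimpleGraph V) (C : Set V) : Set V :=
  {x ∈ C | ∃ y, y ∉ C ∧ G.Adj x y}

/-- Compartment w.r.t. `W`: a maximal connected vertex set whose boundary
lies inside `W`. -/
def IsCompartment (G : SimpleGraph V) (W C : Set V) : Prop :=
  C.Nonempty ∧ (G.induce C).Connected ∧ boundary G C ⊆ W ∧
    ∀ C', C ⊆ C' → (G.induce C').Connected → boundary G C' ⊆ W → C' = C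

/-- Partition of `A` into connected blocks, each with exactly one sink of `S`. -/
def IsPart (G : SimpleGraph V) (A S : Set V) (PP : Set (Set V)) : Prop :=
  ⋃₀ PP = A ∧ (∀ P ∈ PP, ∀ Q ∈ PP, P ≠ Q → Disjoint P Q) ∧
    (∀ P ∈ PP, (G.induce P).Connected) ∧ (∀ P ∈ PP, ∃! s, s ∈ S ∩ P)

/-- `F(S)`: minimum over partitions of the max block cost. -/
noncomputable def Fcost (G : SimpleGraph V) (f : Set V → V → ℝ≥0∞)
    (S : Set V) : ℝ≥0∞ :=
  ⨅ PP ∈ {PP : Set (Set V) | IsPart G Set.univ S PP}, ⨆ P ∈ PP, ⨅ s ∈ S ∩ P, f P s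

/-- Path metric induced by edge lengths `ℓ`. -/
noncomputable def tdist (G : SimpleGraph V) (ℓ : Sym2 V → ℝ≥0∞) (u v : V) : ℝ≥0∞ :=
  ⨅ p : G.Walk u v, (p.edges.map ℓ).sum


section Aux

lemma mem_branch_iff {G : SimpleGraph V} {v u x : V} :
    x ∈ branch G v u ↔ ∃ p : G.Walk u x, v ∉ p.support := by
  constructor
  · rintro ⟨p, hp, -⟩; exact ⟨p, hp⟩
  · rintro ⟨p, hp⟩; exact ⟨p, hp, fun y _ => Set.mem_univ y⟩

lemma branch_self {G : SimpleGraph V} {v u : V} (h : v ≠ u) : u ∈ branch G v u :=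
  mem_branch_iff.2 ⟨SimpleGraph.Walk.nil, by simpa using h⟩

lemma not_v_mem_branch {G : SimpleGraph V} {v u : V} : v ∉ branch G v u := by
  rintro ⟨p, hp, -⟩
  exact hp p.end_mem_support

/-- branch is closed under walks avoiding `v`. -/
lemma branch_closed {G : SimpleGraph V} {v u x y : V} (hx : x ∈ branch G v u)
    (q : G.Walk x y) (hq : v ∉ q.support) : y ∈ branch G v u := by
  obtain ⟨p, hp⟩ := mem_branch_iff.1 hx
  refine mem_branch_iff.2 ⟨p.append q, ?_⟩
  rw [SimpleGraph.Walk.mem_support_append_iff]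
  rintro (h | h)
  · exact hp h
  · exact hq h

/-- Separation: a walk from inside the branch to outside must visit `v`. -/
lemma branch_sep {G : SimpleGraph V} {v u x y : V} (hx : x ∈ branch G v u)
    (hy : y ∉ branch G v u) (q : G.Walk x y) : v ∈ q.support := by
  by_contra h
  exact hy (branch_closed hx q h)

lemma support_subset_branch {G : SimpleGraph V} {v u x : V}
    (p : G.Walk u x) (hp : v ∉ p.support) (hu : u ∈ branch G v u) :
    ∀ y ∈ p.support, y ∈ branch G v u := by
  classical
  intro y hy
  refine branch_closed hu (p.takeUntil y hy) fun hv => ?_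
  exact hp (p.support_takeUntil_subset hy hv)

lemma induce_connected_of_walks {G : SimpleGraph V} {s : Set V} {u : V} (hu : u ∈ s)
    (h : ∀ x ∈ s, ∃ p : G.Walk u x, ∀ y ∈ p.support, y ∈ s) :
    (G.induce s).Connected := by
  refine SimpleGraph.induce_connected_of_patches u hu ?_
  intro x hx
  obtain ⟨p, hp⟩ := h x hx
  refine ⟨{y | y ∈ p.support}, hp, p.start_mem_support, p.end_mem_support, ?_⟩
  exact (p.connected_induce_support).preconnected _ _

lemma branch_connected {G : SimpleGraph V} {v u : V} (h : v ≠ u) :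
    (G.induce (branch G v u)).Connected := by
  refine induce_connected_of_walks (branch_self h) ?_
  rintro x ⟨p, hp, -⟩
  exact ⟨p, support_subset_branch p hp (branch_self h)⟩

lemma induce_singleton_connected (G : SimpleGraph V) (y : V) :
    (G.induce {y}).Connected := by
  rw [SimpleGraph.connected_iff_exists_forall_reachable]
  refine ⟨⟨y, rfl⟩, ?_⟩
  rintro ⟨z, hz⟩
  cases hz
  rfl

lemma induce_insert_connected {G : SimpleGraph V} {s : Set V} {x y : V}
    (hs : (G.induce s).Connected) (hx : x ∈ s) (hadj : G.Adj x y) :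
    (G.induce (s ∪ {y})).Connected :=
  SimpleGraph.connected_induce_union hs.preconnected (induce_singleton_connected G y).preconnected hx rfl hadj

/-- A walk in `G` between two points of a connected induced set, with support in the set. -/
lemma exists_walk_in {G : SimpleGraph V} {s : Set V} (hs : (G.induce s).Connected)
    {a b : V} (ha : a ∈ s) (hb : b ∈ s) :
    ∃ p : G.Walk a b, ∀ y ∈ p.support, y ∈ s := by
  obtain ⟨q⟩ := hs.preconnected ⟨a, ha⟩ ⟨b, hb⟩
  refine ⟨q.map (SimpleGraph.Embedding.induce s).toHom, ?_⟩
  intro y hy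
  have hy2 : y ∈ (q.map (SimpleGraph.Embedding.induce s).toHom).support := hy
  rw [SimpleGraph.Walk.support_map, List.mem_map] at hy2
  obtain ⟨⟨z, hz⟩, -, rfl⟩ := hy2
  exact hz

/-- The chain lemma: walking from `w` to `t` along a path inside `P'`,
repeatedly applying pathMono, then setMono. -/
lemma chain_le {G : SimpleGraph V} {f : Set V → V → ℝ≥0∞} (hf : AtomicCost G f)
    {P' : Set V} (hP'c : (G.induce P').Connected) :
    ∀ {w t : V} (q : G.Walk w t), q.IsPath →
      ∀ U : Set V, w ∈ U → (G.induce U).Connected → U ⊆ P' →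
      (∀ y ∈ q.support, y ∈ P') → (∀ y ∈ q.support, y ∉ U ∨ y = w) →
      f U w ≤ f P' t := by
  intro w t q
  induction q with
  | nil =>
    intro _ U hwU hUc hUP _ _
    exact hf.setMono U P' _ hwU hUP hUc hP'c
  | @cons a b c hab q ih =>
    intro hq U haU hUc hUP hsupP hsupU
    have hb_ne_a : b ≠ a := by
      intro h; subst h
      exact (SimpleGraph.Walk.cons_isPath_iff _ _).1 hq |>.2 q.start_mem_support
    have hbU : b ∉ U := by
      rcases hsupU b (by simp) with h | h
      · exact h
      · exact absurd h hb_ne_a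
    have step : f U a ≤ f (U ∪ {b}) b := hf.pathMono U a b haU hbU hUc hab
    refine step.trans (ih ((SimpleGraph.Walk.cons_isPath_iff _ _).1 hq).1 (U ∪ {b})
      (Or.inr rfl) (induce_insert_connected hUc haU hab)
      (Set.union_subset hUP (by simpa using hsupP b (by simp))) ?_ ?_)
    · intro y hy; exact hsupP y (by simp [hy])
    · intro y hy
      by_cases hyb : y = b
      · exact Or.inr hyb
      · left
        rintro (h | h)
        · rcases hsupU y (by simp [hy]) with h' | h'
          · exact h' h
          · subst h'
            exact ((SimpleGraph.Walk.cons_isPath_iff _ _).1 hq).2 hy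
        · exact hyb h
end Aux

/-- if adjacent `(u,v)` satisfy the peaking criterion, then any
feasible sink placement `S` for threshold `T` must place a sink inside
`V_{-v}(u)`. -/
theorem stmt_6 [Fintype V] (G : SimpleGraph V) (hG : G.IsTree)
    (f : Set V → V → ℝ≥0∞) (hf : AtomicCost G f) (T : ℝ≥0∞)
    (u v : V) (hadj : G.Adj u v)
    (h1 : f (branch G v u) u ≤ T) (h2 : f (branch G v u ∪ {v}) v > T)
    (S : Set V) (hS : FeasibleOn G f T Set.univ S) :
    (S ∩ branch G v u).Nonempty := by
  classical
  by_contra hne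
  rw [Set.not_nonempty_iff_eq_empty] at hne
  set B := branch G v u with hB
  have hvu : v ≠ u := hadj.ne'
  have huB : u ∈ B := branch_self hvu
  have hvB : v ∉ B := not_v_mem_branch
  obtain ⟨PP, hcover, hdisj, hconn, hsink, hcost⟩ := hS
  -- every block meeting B contains v
  have key : ∀ Q ∈ PP, (Q ∩ B).Nonempty → v ∈ Q := by
    rintro Q hQ ⟨x, hxQ, hxB⟩
    obtain ⟨s, ⟨hsS, hsQ⟩, -⟩ := hsink Q hQ
    have hsB : s ∉ B := by
      intro h
      have : s ∈ S ∩ B := ⟨hsS, h⟩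
      simp [hne] at this
    obtain ⟨p, hp⟩ := exists_walk_in (hconn Q hQ) hxQ hsQ
    exact hp v (branch_sep hxB hsB p)
  -- the block containing v
  have hv_mem : v ∈ ⋃₀ PP := by rw [hcover]; trivial
  obtain ⟨P', hP', hvP'⟩ := hv_mem
  -- B ⊆ P'
  have hBP' : B ⊆ P' := by
    intro x hxB
    have : x ∈ ⋃₀ PP := by rw [hcover]; trivial
    obtain ⟨Q, hQ, hxQ⟩ := this
    have hvQ : v ∈ Q := key Q hQ ⟨x, hxQ, hxB⟩
    by_cases hQP : Q = P'
    · exact hQP ▸ hxQ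
    · exact absurd (Set.disjoint_left.1 (hdisj Q hQ P' hP' hQP) hvQ hvP') (by simp)
  -- sink of P'
  obtain ⟨s', ⟨hs'S, hs'P'⟩, -⟩ := hsink P' hP'
  have hcostP' : f P' s' ≤ T := hcost P' hP' s' ⟨hs'S, hs'P'⟩
  have hs'B : s' ∉ B := by
    intro h
    have : s' ∈ S ∩ B := ⟨hs'S, h⟩
    simp [hne] at this
  -- path from v to s' inside P'
  obtain ⟨p, hp⟩ := exists_walk_in (hconn P' hP') hvP' hs'P'
  set q := p.bypass with hq
  have hqP : q.IsPath := p.bypass_isPath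
  have hqsup : ∀ y ∈ q.support, y ∈ P' := fun y hy => hp y (p.support_bypass_subset hy)
  -- vertices of q other than v are not in B
  have hqB : ∀ y ∈ q.support, y ≠ v → y ∉ B := by
    intro y hy hyv hyB
    -- the tail of q from y avoids v
    have hvdrop : v ∉ (q.dropUntil y hy).support := by
      intro hv
      have hnd : q.support.Nodup := hqP.support_nodup
      have hsplit : q.support =
          (q.takeUntil y hy).support ++ (q.dropUntil y hy).support.tail := by
        conv_lhs => rw [← q.take_spec hy]
        exact SimpleGraph.Walk.support_append _ _
      have hvtake : v ∈ (q.takeUntil y hy).support := (q.takeUntil y hy).start_mem_support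
      have hvtail : v ∈ (q.dropUntil y hy).support.tail := by
        rw [SimpleGraph.Walk.support_eq_cons] at hv
        rcases List.mem_cons.1 hv with h | h
        · exact absurd h.symm hyv
        · exact h
      rw [hsplit] at hnd
      exact (List.disjoint_of_nodup_append hnd) hvtake hvtail
    exact hs'B (branch_closed hyB (q.dropUntil y hy) hvdrop)
  -- B ∪ {v} is connected
  have hBvc : (G.induce (B ∪ {v})).Connected :=
    induce_insert_connected (branch_connected hvu) huB hadj
  -- apply the chain lemma
  have hchain : f (B ∪ {v}) v ≤ f P' s' := by
    refine chain_le hf (hconn P' hP') q hqP (B ∪ {v}) (Or.inr rfl) hBvc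
      (Set.union_subset hBP' (by simpa using hvP')) hqsup ?_
    intro y hy
    by_cases hyv : y = v
    · exact Or.inr hyv
    · left
      rintro (h | h)
      · exact hqB y hy hyv h
      · exact hyv h
  exact absurd (hchain.trans hcostP') (not_le.2 h2)
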